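/- Weak duality between problem (PHC) and its dual (PHC*) (inequality (15)). Let (x, v) be a feasible solution of order k. Let (x*, w) be an adjoint arc of order k, let v* : [0,T] → ℝⁿ be any function, let μ* = (μ₀*, μ₁*) ∈ ℝⁿ × ℝⁿ, let m, ω : [0,T] → ℝ be Lebesgue integrable, and let c_f, c_S and c_S^0, …, c_S^{k−2} be real numbers such that: (i) for a.e. t ∈ [0,T], m(t) ≤ ⟨ξ, (−1)^k w(t) − v*(t)⟩ − ⟨η, x*(t)⟩ for all ξ ∈ ℝⁿ and all η ∈ F(ξ, t); (ii) for a.e. t ∈ [0,T], ω(t) ≥ ⟨ξ, −v*(t)⟩ for all ξ ∈ X(t); (iii) c_f ≥ ⟨y₀, (−1)^{k−1} x*^{(k−1)}(0) + μ₀*⟩ + ⟨y₁, μ₁* + (−1)^k x*^{(k−1)}(T)⟩ − f(y₀, y₁) for all y₀, y₁ ∈ ℝⁿ; (iv) c_S ≥ −⟨s₀, μ₀*⟩ − ⟨s₁, μ₁*⟩ for all (s₀, s₁) ∈ S; (v) for each j = 0,…,k−2, c_S^j ≥ ⟨s₀, (−1)^j x*^{(j)}(0)⟩ + ⟨s₁,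 (−1)^{j+1} x*^{(j)}(T)⟩ for all (s₀, s₁) ∈ S. Then f(x(0), x(T)) ≥ −c_f + ∫₀ᵀ m(t)dt − ∫₀ᵀ ω(t)dt − c_S − Σ_{j=0}^{k−2} c_S^j. -/

import Mathlib

open MeasureTheory Matrix Set

/-- A feasible solution of order `k` for the problem (PHC). -/
def IsFeasible (n k : ℕ) (T : ℝ)
    (F : (Fin n → ℝ) → ℝ → Set (Fin n → ℝ))
    (S : Set ((Fin n → ℝ) × (Fin n → ℝ)))
    (X : ℝ → Set (Fin n → ℝ))
    (x v : ℝ → (Fin n → ℝ)) : Prop :=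
  (∀ j < k - 1, Differentiable ℝ (iteratedDeriv j x)) ∧
  IntervalIntegrable v volume 0 T ∧
  (∀ t ∈ Icc (0:ℝ) T,
      iteratedDeriv (k-1) x t = iteratedDeriv (k-1) x 0 + ∫ s in (0:ℝ)..t, v s) ∧
  (∀ᵐ t ∂volume, t ∈ Icc (0:ℝ) T → v t ∈ F (x t) t) ∧
  (∀ j < k, (iteratedDeriv j x 0, iteratedDeriv j x T) ∈ S) ∧
  (∀ t ∈ Icc (0:ℝ) T, x t ∈ X t)

/-- An adjoint arc of order `k`. -/
def IsAdjointArc (n k : ℕ) (T : ℝ) (xs w : ℝ → (Fin n → ℝ)) : Prop :=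
  (∀ j < k - 1, Differentiable ℝ (iteratedDeriv j xs)) ∧
  IntervalIntegrable w volume 0 T ∧
  (∀ t ∈ Icc (0:ℝ) T,
      iteratedDeriv (k-1) xs t = iteratedDeriv (k-1) xs 0 + ∫ s in (0:ℝ)..t, w s)

/-!
Testing constraints (i) and (ii) against the feasible pair `(x(t), v(t))` bounds `m(t)` by
`ω(t) - (⟨x⁽ᵏ⁾(t), x*(t)⟩ - (-1)ᵏ ⟨x(t), x*⁽ᵏ⁾(t)⟩)`. Integrating by parts `k` times (the Lagrange
identity, valid because `x⁽ᵏ⁻¹⁾` and `x*⁽ᵏ⁻¹⁾` are absolutely continuous) turns the integral of the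
bracket into the boundary values of the bilinear concomitant `∑ᵢ (-1)ⁱ ⟨x⁽ᵏ⁻¹⁻ⁱ⁾, x*⁽ⁱ⁾⟩`. Since
`(x⁽ʲ⁾(0), x⁽ʲ⁾(T)) ∈ S`, its top-order boundary term is bounded by (iii) and (iv) and the others
by (v).
-/

theorem Finset.sum_range_neg_one_pow_mul_add {R : Type*} [CommRing R] (c : ℕ → R) (k : ℕ) :
    ∑ i ∈ Finset.range k, (-1) ^ i * (c i + c (i + 1)) = c 0 - (-1) ^ k * c k := by
  have htel := Finset.sum_range_sub' (fun i => (-1) ^ i * c i) k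
  rw [pow_zero, one_mul] at htel
  rw [← htel]
  exact Finset.sum_congr rfl fun i _ => by ring

def IsPrimitiveOn {E : Type*} [NormedAddCommGroup E] [NormedSpace ℝ E] (f f' : ℝ → E)
    (a b : ℝ) : Prop :=
  IntervalIntegrable f' volume a b ∧ ∀ t ∈ uIcc a b, f t = f a + ∫ s in a..t, f' s

section DotProduct

variable {ι : Type*} [Fintype ι] {f g : ℝ → ι → ℝ} {a b : ℝ}

theorem IntervalIntegrable.dotProduct_continuousOn (hf : IntervalIntegrable f volume a b)
    (hg : ContinuousOn g (uIcc a b)) : IntervalIntegrable (fun t => f t ⬝ᵥ g t) volume a b := by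
  have hsum : (fun t => f t ⬝ᵥ g t) = ∑ i, fun t => f t i * g t i := by
    ext t; simp [dotProduct]
  rw [hsum]
  exact IntervalIntegrable.sum _ fun i _ =>
    IntervalIntegrable.mul_continuousOn ⟨hf.1.eval i, hf.2.eval i⟩
      ((continuous_apply i).comp_continuousOn hg)

theorem IntervalIntegrable.continuousOn_dotProduct (hf : IntervalIntegrable f volume a b)
    (hg : ContinuousOn g (uIcc a b)) : IntervalIntegrable (fun t => g t ⬝ᵥ f t) volume a b := by
  simpa only [dotProduct_comm] using hf.dotProduct_continuousOn hg

end DotProduct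

namespace IsPrimitiveOn

variable {E : Type*} [NormedAddCommGroup E] [NormedSpace ℝ E] {a b : ℝ}

theorem continuousOn {f f' : ℝ → E} (hf : IsPrimitiveOn f f' a b) : ContinuousOn f (uIcc a b) :=
  (continuousOn_const.add (intervalIntegral.continuousOn_primitive_interval' hf.1
    left_mem_uIcc)).congr hf.2

theorem of_hasDerivAt [CompleteSpace E] {f f' : ℝ → E}
    (hf : ∀ t ∈ uIcc a b, HasDerivAt f (f' t) t) (hf' : ContinuousOn f' (uIcc a b)) :
    IsPrimitiveOn f f' a b := by
  refine ⟨hf'.intervalIntegrable, fun t ht => ?_⟩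
  have hsub : uIcc a t ⊆ uIcc a b := uIcc_subset_uIcc_left ht
  rw [intervalIntegral.integral_eq_sub_of_hasDerivAt (fun s hs => hf s (hsub hs))
    (hf'.mono hsub).intervalIntegrable]
  abel

theorem eval {ι : Type*} [Fintype ι] {f f' : ℝ → ι → ℝ} (hf : IsPrimitiveOn f f' a b) (i : ι) :
    IsPrimitiveOn (f · i) (f' · i) a b := by
  refine ⟨⟨hf.1.1.eval i, hf.1.2.eval i⟩, fun t ht => ?_⟩
  have hcomm := (ContinuousLinearMap.proj (R := ℝ) (φ := fun _ : ι => ℝ) i)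
    |>.intervalIntegral_comp_comm (hf.1.mono_set (uIcc_subset_uIcc_left ht))
  simp only [ContinuousLinearMap.proj_apply] at hcomm
  show f t i = f a i + ∫ s in a..t, f' s i
  rw [hf.2 t ht, Pi.add_apply, hcomm]

/-- A consequence of Lebesgue's differentiation theorem. -/
theorem exists_absolutelyContinuousOnInterval {f f' : ℝ → ℝ} (hf : IsPrimitiveOn f f' a b) :
    ∃ F : ℝ → ℝ, AbsolutelyContinuousOnInterval F a b ∧ EqOn F f (uIcc a b) ∧
      ∀ᵐ t, t ∈ uIcc a b → HasDerivAt F (f' t) t := by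
  refine ⟨fun t => f a + ∫ s in a..t, f' s,
    (LipschitzWith.const (f a)).lipschitzOnWith.absolutelyContinuousOnInterval.add
      (hf.1.absolutelyContinuousOnInterval_intervalIntegral left_mem_uIcc),
    fun t ht => (hf.2 t ht).symm, ?_⟩
  filter_upwards [hf.1.ae_hasDerivAt_integral] with t ht ht'
  exact (ht ht' a left_mem_uIcc).const_add _

theorem integral_mul_add_mul_eq_sub {f f' g g' : ℝ → ℝ}
    (hf : IsPrimitiveOn f f' a b) (hg : IsPrimitiveOn g g' a b) :
    ∫ t in a..b, (f' t * g t + f t * g' t) = f b * g b - f a * g a := by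
  obtain ⟨F, hF, hFf, hF'⟩ := hf.exists_absolutelyContinuousOnInterval
  obtain ⟨G, hG, hGg, hG'⟩ := hg.exists_absolutelyContinuousOnInterval
  rw [← hFf right_mem_uIcc, ← hGg right_mem_uIcc, ← hFf left_mem_uIcc, ← hGg left_mem_uIcc,
    ← hF.integral_deriv_mul_eq_sub hG]
  refine intervalIntegral.integral_congr_ae ?_
  filter_upwards [hF', hG'] with t htF htG ht
  replace ht := uIoc_subset_uIcc ht
  rw [(htF ht).deriv, (htG ht).deriv, hFf ht, hGg ht]

variable {ι : Type*} [Fintype ι]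

theorem intervalIntegrable_dotProduct_add {f f' g g' : ℝ → ι → ℝ}
    (hf : IsPrimitiveOn f f' a b) (hg : IsPrimitiveOn g g' a b) :
    IntervalIntegrable (fun t => f' t ⬝ᵥ g t + f t ⬝ᵥ g' t) volume a b :=
  (hf.1.dotProduct_continuousOn hg.continuousOn).add
    (hg.1.continuousOn_dotProduct hf.continuousOn)

theorem integral_dotProduct_add_eq_sub {f f' g g' : ℝ → ι → ℝ}
    (hf : IsPrimitiveOn f f' a b) (hg : IsPrimitiveOn g g' a b) :
    ∫ t in a..b, (f' t ⬝ᵥ g t + f t ⬝ᵥ g' t) = f b ⬝ᵥ g b - f a ⬝ᵥ g a := by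
  have hint : ∀ i ∈ Finset.univ, IntervalIntegrable (fun t => f' t i * g t i + f t i * g' t i)
      volume a b := fun i _ =>
    ((hf.eval i).1.mul_continuousOn (hg.eval i).continuousOn).add
      ((hg.eval i).1.continuousOn_mul (hf.eval i).continuousOn)
  simp only [dotProduct, ← Finset.sum_add_distrib, ← Finset.sum_sub_distrib]
  rw [intervalIntegral.integral_finsetSum hint]
  exact Finset.sum_congr rfl fun i _ => integral_mul_add_mul_eq_sub (hf.eval i) (hg.eval i)

end IsPrimitiveOn

open Finset in
theorem integral_dotProduct_sub_eq_sum {ι : Type*} [Fintype ι] {a b : ℝ} {k : ℕ}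
    {y z : ℕ → ℝ → ι → ℝ} (hy : ∀ j < k, IsPrimitiveOn (y j) (y (j + 1)) a b)
    (hz : ∀ j < k, IsPrimitiveOn (z j) (z (j + 1)) a b) :
    ∫ t in a..b, (y k t ⬝ᵥ z 0 t - (-1) ^ k * (y 0 t ⬝ᵥ z k t)) =
      ∑ i ∈ range k, (-1) ^ i * (y (k - 1 - i) b ⬝ᵥ z i b - y (k - 1 - i) a ⬝ᵥ z i a) := by
  have hyz : ∀ i ∈ range k, IsPrimitiveOn (y (k - 1 - i)) (y (k - 1 - i + 1)) a b ∧
      IsPrimitiveOn (z i) (z (i + 1)) a b := fun i hi =>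
    ⟨hy _ (by grind), hz i (mem_range.1 hi)⟩
  calc ∫ t in a..b, (y k t ⬝ᵥ z 0 t - (-1) ^ k * (y 0 t ⬝ᵥ z k t))
      = ∫ t in a..b, ∑ i ∈ range k,
          (-1) ^ i * (y (k - 1 - i + 1) t ⬝ᵥ z i t + y (k - 1 - i) t ⬝ᵥ z (i + 1) t) := by
        refine intervalIntegral.integral_congr fun t _ => ?_
        have htel := sum_range_neg_one_pow_mul_add (fun i => y (k - i) t ⬝ᵥ z i t) k
        rw [Nat.sub_zero, Nat.sub_self] at htel
        rw [← htel]
        exact sum_congr rfl fun i hi => by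
          rw [show k - (i + 1) = k - 1 - i by grind, show k - 1 - i + 1 = k - i by grind]
    _ = ∑ i ∈ range k, (-1) ^ i *
          ∫ t in a..b, (y (k - 1 - i + 1) t ⬝ᵥ z i t + y (k - 1 - i) t ⬝ᵥ z (i + 1) t) := by
        rw [intervalIntegral.integral_finsetSum fun i hi =>
          ((hyz i hi).1.intervalIntegrable_dotProduct_add (hyz i hi).2).const_mul _]
        simp only [intervalIntegral.integral_const_mul]
    _ = _ := sum_congr rfl fun i hi => by
        rw [(hyz i hi).1.integral_dotProduct_add_eq_sub (hyz i hi).2]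

def HasIteratedDerivOn {E : Type*} [NormedAddCommGroup E] [NormedSpace ℝ E] (k : ℕ)
    (x v : ℝ → E) (a b : ℝ) : Prop :=
  (∀ j < k - 1, Differentiable ℝ (iteratedDeriv j x)) ∧
    IsPrimitiveOn (iteratedDeriv (k - 1) x) v a b

noncomputable def derivSeq {E : Type*} [NormedAddCommGroup E] [NormedSpace ℝ E] (k : ℕ)
    (x v : ℝ → E) (j : ℕ) : ℝ → E :=
  if j < k then iteratedDeriv j x else v

open Finset in
noncomputable def bilinearConcomitant {ι : Type*} [Fintype ι] (k : ℕ) (x y : ℝ → ι → ℝ)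
    (t : ℝ) : ℝ :=
  ∑ i ∈ range k, (-1) ^ i * (iteratedDeriv (k - 1 - i) x t ⬝ᵥ iteratedDeriv i y t)

section derivSeq

variable {E : Type*} [NormedAddCommGroup E] [NormedSpace ℝ E] {k j : ℕ} {x v : ℝ → E}

theorem derivSeq_of_lt (hj : j < k) : derivSeq k x v j = iteratedDeriv j x := if_pos hj

theorem derivSeq_self : derivSeq k x v k = v := if_neg k.lt_irrefl

theorem derivSeq_zero (hk : 0 < k) : derivSeq k x v 0 = x := by
  rw [derivSeq_of_lt hk, iteratedDeriv_zero]

end derivSeq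

namespace HasIteratedDerivOn

variable {E : Type*} [NormedAddCommGroup E] [NormedSpace ℝ E] {k j : ℕ} {x v : ℝ → E} {a b : ℝ}

theorem continuousOn_iteratedDeriv (h : HasIteratedDerivOn k x v a b) (hj : j < k) :
    ContinuousOn (iteratedDeriv j x) (uIcc a b) := by
  rcases (Nat.le_sub_one_of_lt hj).lt_or_eq with hj' | rfl
  · exact (h.1 j hj').continuous.continuousOn
  · exact h.2.continuousOn

theorem continuousOn (h : HasIteratedDerivOn k x v a b) (hk : 0 < k) :
    ContinuousOn x (uIcc a b) :=
  iteratedDeriv_zero (f := x) ▸ h.continuousOn_iteratedDeriv hk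

theorem isPrimitiveOn_derivSeq [CompleteSpace E] (h : HasIteratedDerivOn k x v a b) (hj : j < k) :
    IsPrimitiveOn (derivSeq k x v j) (derivSeq k x v (j + 1)) a b := by
  rw [derivSeq_of_lt hj]
  rcases (Nat.le_sub_one_of_lt hj).lt_or_eq with hj' | rfl
  · rw [derivSeq_of_lt (by omega)]
    refine .of_hasDerivAt (fun t _ => ?_) (h.continuousOn_iteratedDeriv (by omega))
    rw [iteratedDeriv_succ]
    exact (h.1 j hj').differentiableAt.hasDerivAt
  · rw [Nat.sub_add_cancel (by omega), derivSeq_self]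
    exact h.2

theorem integral_dotProduct_sub_eq_sub {ι : Type*} [Fintype ι] {x v y w : ℝ → ι → ℝ}
    (hk : 0 < k) (hx : HasIteratedDerivOn k x v a b) (hy : HasIteratedDerivOn k y w a b) :
    ∫ t in a..b, (v t ⬝ᵥ y t - (-1) ^ k * (x t ⬝ᵥ w t)) =
      bilinearConcomitant k x y b - bilinearConcomitant k x y a := by
  have h := integral_dotProduct_sub_eq_sum (y := derivSeq k x v) (z := derivSeq k y w)
    (fun j hj => hx.isPrimitiveOn_derivSeq hj)
    (fun j hj => hy.isPrimitiveOn_derivSeq hj)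
  simp only [derivSeq_self, derivSeq_zero hk] at h
  rw [h, bilinearConcomitant, bilinearConcomitant, ← Finset.sum_sub_distrib]
  refine Finset.sum_congr rfl fun i hi => ?_
  rw [derivSeq_of_lt (by omega), derivSeq_of_lt (Finset.mem_range.1 hi), mul_sub]

end HasIteratedDerivOn

open Finset in
theorem bilinearConcomitant_sub_le {n k : ℕ} (hk : 0 < k) {T : ℝ}
    {S : Set ((Fin n → ℝ) × (Fin n → ℝ))} {f : (Fin n → ℝ) → (Fin n → ℝ) → ℝ}
    {x xs : ℝ → (Fin n → ℝ)} {μ₀ μ₁ : Fin n → ℝ} {cf cS : ℝ} {cSj : ℕ → ℝ}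
    (hS : ∀ j < k, (iteratedDeriv j x 0, iteratedDeriv j x T) ∈ S)
    (hiii : ∀ y₀ y₁ : Fin n → ℝ,
      y₀ ⬝ᵥ ((-1:ℝ)^(k-1) • iteratedDeriv (k-1) xs 0 + μ₀)
        + y₁ ⬝ᵥ (μ₁ + (-1:ℝ)^k • iteratedDeriv (k-1) xs T) - f y₀ y₁ ≤ cf)
    (hiv : ∀ s ∈ S, -(s.1 ⬝ᵥ μ₀) - s.2 ⬝ᵥ μ₁ ≤ cS)
    (hv : ∀ j < k - 1, ∀ s ∈ S,
      s.1 ⬝ᵥ ((-1:ℝ)^j • iteratedDeriv j xs 0)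
        + s.2 ⬝ᵥ ((-1:ℝ)^(j+1) • iteratedDeriv j xs T) ≤ cSj j) :
    bilinearConcomitant k x xs 0 - bilinearConcomitant k x xs T ≤
      f (x 0) (x T) + cf + cS + ∑ j ∈ range (k - 1), cSj j := by
  obtain ⟨Q, rfl⟩ := Nat.exists_eq_add_of_lt hk
  simp only [bilinearConcomitant, zero_add, Nat.add_sub_cancel] at hiii hv ⊢
  rw [← sum_sub_distrib, sum_range_succ, Nat.sub_self, iteratedDeriv_zero]
  have hlow : ∀ i ∈ range Q, (-1) ^ i * (iteratedDeriv (Q - i) x 0 ⬝ᵥ iteratedDeriv i xs 0) -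
      (-1) ^ i * (iteratedDeriv (Q - i) x T ⬝ᵥ iteratedDeriv i xs T) ≤ cSj i := by
    intro i hi
    have h := hv i (mem_range.1 hi) _ (hS (Q - i) (by omega))
    simp only [dotProduct_smul, smul_eq_mul, pow_succ] at h
    linarith
  have htop : (-1) ^ Q * (x 0 ⬝ᵥ iteratedDeriv Q xs 0) - (-1) ^ Q * (x T ⬝ᵥ iteratedDeriv Q xs T)
      ≤ f (x 0) (x T) + cf + cS := by
    have h₁ := hiii (x 0) (x T)
    have h₂ := hiv _ (hS 0 (by omega))
    simp only [dotProduct_add, dotProduct_smul, smul_eq_mul, pow_succ, iteratedDeriv_zero]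
      at h₁ h₂
    linarith
  linarith [sum_le_sum hlow]

theorem weak_duality_PHC_general
    (n k : ℕ) (hk : 1 ≤ k) (T : ℝ) (hT : 0 < T)
    (F : (Fin n → ℝ) → ℝ → Set (Fin n → ℝ))
    (S : Set ((Fin n → ℝ) × (Fin n → ℝ)))
    (X : ℝ → Set (Fin n → ℝ))
    (f : (Fin n → ℝ) → (Fin n → ℝ) → ℝ)
    (x v : ℝ → (Fin n → ℝ))
    (hfeas : IsFeasible n k T F S X x v)
    (xs w : ℝ → (Fin n → ℝ))
    (hadj : IsAdjointArc n k T xs w)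
    (vs : ℝ → (Fin n → ℝ))
    (μ₀ μ₁ : Fin n → ℝ)
    (m ω : ℝ → ℝ)
    (hm : IntervalIntegrable m volume 0 T)
    (hω : IntervalIntegrable ω volume 0 T)
    (cf cS : ℝ) (cSj : ℕ → ℝ)
    -- (i): m(t) minorizes M_F((−1)^k x*⁽ᵏ⁾(t) − v*(t), x*(t))
    (hi : ∀ᵐ t ∂volume, t ∈ Icc (0:ℝ) T → ∀ ξ η, η ∈ F ξ t →
      m t ≤ ξ ⬝ᵥ ((-1:ℝ)^k • w t - vs t) - η ⬝ᵥ xs t)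
    -- (ii): ω(t) majorizes the support function W_{X(t)}(−v*(t))
    (hii : ∀ᵐ t ∂volume, t ∈ Icc (0:ℝ) T → ∀ ξ ∈ X t, ξ ⬝ᵥ (-vs t) ≤ ω t)
    -- (iii): c_f majorizes the conjugate value
    (hiii : ∀ y₀ y₁ : Fin n → ℝ,
      y₀ ⬝ᵥ ((-1:ℝ)^(k-1) • iteratedDeriv (k-1) xs 0 + μ₀)
        + y₁ ⬝ᵥ (μ₁ + (-1:ℝ)^k • iteratedDeriv (k-1) xs T) - f y₀ y₁ ≤ cf)
    -- (iv): c_S majorizes W_S(−μ₀*, −μ₁*)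
    (hiv : ∀ s ∈ S, -(s.1 ⬝ᵥ μ₀) - s.2 ⬝ᵥ μ₁ ≤ cS)
    -- (v): c_S^j majorizes W_S((−1)^j x*⁽ʲ⁾(0), (−1)^{j+1} x*⁽ʲ⁾(T))
    (hv : ∀ j < k - 1, ∀ s ∈ S,
      s.1 ⬝ᵥ ((-1:ℝ)^j • iteratedDeriv j xs 0)
        + s.2 ⬝ᵥ ((-1:ℝ)^(j+1) • iteratedDeriv j xs T) ≤ cSj j) :
    -cf + (∫ t in (0:ℝ)..T, m t) - (∫ t in (0:ℝ)..T, ω t) - cS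
      - ∑ j ∈ Finset.range (k-1), cSj j ≤ f (x 0) (x T) := by
  obtain ⟨hxdiff, hvint, hxrep, hvF, hS, hxX⟩ := hfeas
  obtain ⟨hxsdiff, hwint, hxsrep⟩ := hadj
  have hx : HasIteratedDerivOn k x v 0 T := ⟨hxdiff, hvint, uIcc_of_le hT.le ▸ hxrep⟩
  have hxs : HasIteratedDerivOn k xs w 0 T := ⟨hxsdiff, hwint, uIcc_of_le hT.le ▸ hxsrep⟩
  have hint : IntervalIntegrable (fun t => v t ⬝ᵥ xs t - (-1) ^ k * (x t ⬝ᵥ w t)) volume 0 T :=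
    (hvint.dotProduct_continuousOn (hxs.continuousOn hk)).sub
      ((hwint.continuousOn_dotProduct (hx.continuousOn hk)).const_mul _)
  have hpt : m ≤ᵐ[volume.restrict (Icc 0 T)]
      fun t => ω t - (v t ⬝ᵥ xs t - (-1) ^ k * (x t ⬝ᵥ w t)) := by
    rw [Filter.EventuallyLE, ae_restrict_iff' measurableSet_Icc]
    filter_upwards [hi, hii, hvF] with t hit hiit hvFt ht
    have h₁ := hit ht (x t) (v t) (hvFt ht)
    have h₂ := hiit ht (x t) (hxX t ht)
    rw [dotProduct_sub, dotProduct_smul, smul_eq_mul] at h₁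
    rw [dotProduct_neg] at h₂
    linarith
  have hmono := intervalIntegral.integral_mono_ae_restrict hT.le hm (hω.sub hint) hpt
  rw [intervalIntegral.integral_sub hω hint, hx.integral_dotProduct_sub_eq_sub hk hxs] at hmono
  linarith [bilinearConcomitant_sub_le hk hS hiii hiv hv]

/-- Inequality (15): weak duality between problem (PHC) and its dual (PHC*). -/
theorem weak_duality_PHC
    (n k : ℕ) (hn : 1 ≤ n) (hk : 1 ≤ k) (T : ℝ) (hT : 0 < T)
    (F : (Fin n → ℝ) → ℝ → Set (Fin n → ℝ))
    (S : Set ((Fin n → ℝ) × (Fin n → ℝ)))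
    (X : ℝ → Set (Fin n → ℝ))
    (f : (Fin n → ℝ) → (Fin n → ℝ) → ℝ)
    (x v : ℝ → (Fin n → ℝ))
    (hfeas : IsFeasible n k T F S X x v)
    (xs w : ℝ → (Fin n → ℝ))
    (hadj : IsAdjointArc n k T xs w)
    (vs : ℝ → (Fin n → ℝ))
    (μ₀ μ₁ : Fin n → ℝ)
    (m ω : ℝ → ℝ)
    (hm : IntervalIntegrable m volume 0 T)
    (hω : IntervalIntegrable ω volume 0 T)
    (cf cS : ℝ) (cSj : ℕ → ℝ)
    -- (i): m(t) minorizes M_F((−1)^k x*⁽ᵏ⁾(t) − v*(t), x*(t))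
    (hi : ∀ᵐ t ∂volume, t ∈ Icc (0:ℝ) T → ∀ ξ η, η ∈ F ξ t →
      m t ≤ ξ ⬝ᵥ ((-1:ℝ)^k • w t - vs t) - η ⬝ᵥ xs t)
    -- (ii): ω(t) majorizes the support function W_{X(t)}(−v*(t))
    (hii : ∀ᵐ t ∂volume, t ∈ Icc (0:ℝ) T → ∀ ξ ∈ X t, ξ ⬝ᵥ (-vs t) ≤ ω t)
    -- (iii): c_f majorizes the conjugate value
    (hiii : ∀ y₀ y₁ : Fin n → ℝ,
      y₀ ⬝ᵥ ((-1:ℝ)^(k-1) • iteratedDeriv (k-1) xs 0 + μ₀)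
        + y₁ ⬝ᵥ (μ₁ + (-1:ℝ)^k • iteratedDeriv (k-1) xs T) - f y₀ y₁ ≤ cf)
    -- (iv): c_S majorizes W_S(−μ₀*, −μ₁*)
    (hiv : ∀ s ∈ S, -(s.1 ⬝ᵥ μ₀) - s.2 ⬝ᵥ μ₁ ≤ cS)
    -- (v): c_S^j majorizes W_S((−1)^j x*⁽ʲ⁾(0), (−1)^{j+1} x*⁽ʲ⁾(T))
    (hv : ∀ j < k - 1, ∀ s ∈ S,
      s.1 ⬝ᵥ ((-1:ℝ)^j • iteratedDeriv j xs 0)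
        + s.2 ⬝ᵥ ((-1:ℝ)^(j+1) • iteratedDeriv j xs T) ≤ cSj j) :
    -cf + (∫ t in (0:ℝ)..T, m t) - (∫ t in (0:ℝ)..T, ω t) - cS
      - ∑ j ∈ Finset.range (k-1), cSj j ≤ f (x 0) (x T) :=
  weak_duality_PHC_general n k hk T hT F S X f x v hfeas xs w hadj vs μ₀ μ₁ m ω hm hω cf cS cSj hi
    hii hiii hiv hv
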